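/- arXiv:2305.05656 — 5 statements merged into one kernel-verified Lean document; each statement's English description precedes it below -/
import Mathlib

section
/- Let p be a probability mass function on [n] = {1,…,n} and let X₁, X₂, … be an i.i.d. sequence distributed according to p (the coordinate process on [n]^ℕ with the infinite product measure of p). Let F be a family of subsets of [n] that is upward closed under inclusion and such that every S ∈ F satisfies |S| ≥ k. Let T_F be the least r ≥ 1 such that {X₁,…,X_r} ∈ F, and let T_k be the least r ≥ 1 such that |{X₁,…,X_r}| ≥ k (both ℕ∪{∞}-valued). Then E[T_k] ≤ E[T_F], where expectations are taken in [0,∞]. (This expresses that an [n,k] MDS code, which can decode from any k distinct strands, minimizes the expected sample size among all length-n codes.) -/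
open MeasureTheory Finset
open scoped ENNReal

/-- The first time `r ≥ 1` (as an element of `[0,∞]`, with value `∞` if there is no such time)
at which the condition `cond r ω` holds. -/
noncomputable def firstTime {Ω : Type*} (cond : ℕ → Ω → Prop) (ω : Ω) : ℝ≥0∞ :=
  sInf {x : ℝ≥0∞ | ∃ r : ℕ, x = (r : ℝ≥0∞) ∧ 1 ≤ r ∧ cond r ω}

/-- Let `p` be a probability mass function on `[n]` and let `X₁, X₂, …` be an i.i.d. sequence
distributed according to `p` (the coordinate process `ω 0, ω 1, …` on `[n]^ℕ` under the
infinite product measure `μ` of `p`, characterized by its values on cylinder sets).  Let `F` be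
a family of subsets of `[n]`, upward closed under inclusion, all of whose members have size at
least `k`.  Let `T_F` be the least `r ≥ 1` such that `{X₁,…,X_r} ∈ F` and `T_k` the least
`r ≥ 1` such that `|{X₁,…,X_r}| ≥ k`.  Then `E[T_k] ≤ E[T_F]` (expectations in `[0,∞]`). -/
theorem mds_minimizes_expected_coverage_depth (n k : ℕ) (p : Fin n → ℝ≥0∞)
    (hp : ∑ i, p i = 1) (μ : Measure (ℕ → Fin n))
    (hμ : ∀ (m : ℕ) (a : Fin m → Fin n),
      μ {ω : ℕ → Fin n | ∀ i : Fin m, ω (i : ℕ) = a i} = ∏ i : Fin m, p (a i))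
    (F : Set (Finset (Fin n)))
    (hup : ∀ S T : Finset (Fin n), S ∈ F → S ⊆ T → T ∈ F)
    (hcard : ∀ S ∈ F, k ≤ S.card) :
    ∫⁻ ω, firstTime
        (fun r ω => k ≤ ((Finset.univ : Finset (Fin r)).image (fun j => ω (j : ℕ))).card) ω ∂μ ≤
      ∫⁻ ω, firstTime
        (fun r ω => ((Finset.univ : Finset (Fin r)).image (fun j => ω (j : ℕ))) ∈ F) ω ∂μ := by
  refine lintegral_mono fun ω => sInf_le_sInf ?_
  rintro x ⟨r, rfl, hr, hF⟩
  exact ⟨r, rfl, hr, hcard _ hF⟩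
end

section
/- Let n ≥ k ≥ 1 be integers. For any probability mass function p = (p₁,…,pₙ) on [n] = {1,…,n}, let X₁, X₂, … be an i.i.d. sequence distributed according to p, and let T_k^p be the least r ≥ 1 such that at least k distinct values appear among X₁,…,X_r. Then E[T_k^p] ≥ E[T_k^u], where u = (1/n,…,1/n) is the uniform distribution and expectations are taken in [0,∞]. That is, among all channel distributions, the uniform distribution minimizes the expected sample size needed to collect k distinct coupons out of n. -/
open MeasureTheory Finset
open scoped ENNReal

/-!
The hitting time satisfies `T = 1 + ∑_{r ≥ 1} 1[fewer than k values among X₁, …, X_r]`, so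
`E[T] = 1 + ∑_{r ≥ 1} F_r(p)`, where `F_r(p)` is the `p`-mass of the words of length `r` with
fewer than `k` distinct letters. It suffices to show that `F_r` is minimal at the uniform
distribution.

If `q` arises from `p` by moving `p i ≤ p j` towards each other at constant sum, then
`F_r(q) ≤ F_r(p)`. Merge the letter `j` into `i`: the words above a merged word `b` are obtained
by turning a subset `J` of the set `M` of `i`-positions of `b` into `j`. Such a word has mass
`W · p j ^ #J · p i ^ #(M \ J)`, where `W` is the mass of the other positions, and
`d + [J ≠ M] + [J ≠ ∅]` distinct letters, where `d` counts the letters of `b` other than `i`.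
Summing over `J` gives `W` times `(p i + p j) ^ #M`, `p i ^ #M + p j ^ #M` or a quantity
independent of `p`, and `x ^ m + y ^ m` can only decrease when `x` and `y` move towards each
other. Finitely many such moves, each fixing one more coordinate at `1/n`, reach the uniform
distribution.
-/

namespace CouponCollector

section HittingTime

variable {Ω : Type*} {cond : ℕ → Ω → Prop}

lemma firstTime_eq_one_add_encard (hmono : ∀ ω, Monotone fun r => cond r ω) (ω : Ω) :
    firstTime cond ω = 1 + {r | ¬ cond (r + 1) ω}.encard := by
  by_cases hex : ∃ r, cond (r + 1) ω
  · classical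
    have hfail : {r | ¬ cond (r + 1) ω} = {r | r < Nat.find hex} := by
      ext r
      simp only [Set.mem_ofPred_eq, Nat.lt_find_iff]
      exact ⟨fun h m hm hc => h (hmono ω (by omega) hc), fun h => h r le_rfl⟩
    have hleast : IsLeast {x : ℝ≥0∞ | ∃ r : ℕ, x = r ∧ 1 ≤ r ∧ cond r ω}
        ((Nat.find hex + 1 : ℕ) : ℝ≥0∞) := by
      refine ⟨⟨_, rfl, by omega, Nat.find_spec hex⟩, ?_⟩
      rintro _ ⟨r, rfl, hr, hc⟩
      obtain ⟨r, rfl⟩ := Nat.exists_eq_add_of_le' hr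
      exact_mod_cast Nat.add_le_add_right (Nat.find_min' hex hc) 1
    rw [firstTime, hleast.isGLB.sInf_eq, hfail, Set.Nat.encard_range]
    push_cast
    ring
  · push Not at hex
    have hempty : {x : ℝ≥0∞ | ∃ r : ℕ, x = r ∧ 1 ≤ r ∧ cond r ω} = ∅ := by
      ext x
      simp only [Set.mem_ofPred_eq, Set.mem_empty_iff_false, iff_false]
      rintro ⟨r, -, hr, hc⟩
      obtain ⟨r, rfl⟩ := Nat.exists_eq_add_of_le' hr
      exact hex r hc
    have hfail : {r | ¬ cond (r + 1) ω} = Set.univ := Set.eq_univ_of_forall hex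
    rw [firstTime, hempty, sInf_empty, hfail, Set.encard_univ, ENat.card_eq_top_of_infinite]
    simp

lemma firstTime_eq_one_add_tsum (hmono : ∀ ω, Monotone fun r => cond r ω) (ω : Ω) :
    firstTime cond ω = 1 + ∑' r, {ω | ¬ cond (r + 1) ω}.indicator 1 ω := by
  rw [firstTime_eq_one_add_encard hmono, ← ENNReal.tsum_set_one,
    _root_.tsum_subtype _ (fun _ => (1 : ℝ≥0∞))]
  congr 2 with r

end HittingTime

section Balancing

lemma add_pow_add_pow_le {x y : ℝ≥0∞} (δ : ℝ≥0∞) (h : x ≤ y) (m : ℕ) :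
    (x + δ) ^ m + y ^ m ≤ x ^ m + (y + δ) ^ m := by
  rw [add_pow, add_pow, sum_range_succ, sum_range_succ]
  simp only [Nat.sub_self, pow_zero, Nat.choose_self, Nat.cast_one, mul_one]
  rw [add_right_comm, add_comm (x ^ m)]
  gcongr

lemma pow_add_pow_le_of_balanced {x y x' y' : ℝ≥0∞} (hs : x' + y' = x + y) (hx : x ≤ x')
    (hy : x ≤ y') (hx_top : x ≠ ∞) (m : ℕ) : x' ^ m + y' ^ m ≤ x ^ m + y ^ m := by
  obtain ⟨δ, rfl⟩ := exists_add_of_le hx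
  obtain rfl : y = y' + δ := (ENNReal.add_right_inj hx_top).mp (by rw [← hs]; ring)
  exact add_pow_add_pow_le δ hy m

variable {β : Type*} [DecidableEq β]

lemma sum_powerset_pow_mul_pow (M : Finset β) (x y : ℝ≥0∞) :
    ∑ J ∈ M.powerset, y ^ #J * x ^ #(M \ J) = (y + x) ^ #M := by
  rw [← sum_pow_mul_eq_add_pow]
  refine sum_congr rfl fun J hJ => ?_
  rw [card_sdiff_of_subset (mem_powerset.mp hJ)]

lemma sum_powerset_ite_le_of_balanced (M : Finset β) (d k : ℕ) {x y x' y' : ℝ≥0∞}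
    (hs : x' + y' = x + y) (hx : x ≤ x') (hy : x ≤ y') (hx_top : x ≠ ∞) :
    ∑ J ∈ M.powerset, (if d + (if J = M then 0 else 1) + (if J = ∅ then 0 else 1) < k
        then y' ^ #J * x' ^ #(M \ J) else 0) ≤
      ∑ J ∈ M.powerset, (if d + (if J = M then 0 else 1) + (if J = ∅ then 0 else 1) < k
        then y ^ #J * x ^ #(M \ J) else 0) := by
  rcases M.eq_empty_or_nonempty with rfl | hM
  · simp
  have hM₀ : M ≠ ∅ := hM.ne_empty
  by_cases h2 : d + 2 < k
  · have hall : ∀ J, d + (if J = M then 0 else 1) + (if J = ∅ then 0 else 1) < k := by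
      intro J
      split_ifs <;> omega
    simp only [hall, if_true]
    rw [sum_powerset_pow_mul_pow, sum_powerset_pow_mul_pow, add_comm y, add_comm y', hs]
  by_cases h1 : d + 1 < k
  · have hends : ∀ z w : ℝ≥0∞, ∑ J ∈ M.powerset,
        (if d + (if J = M then 0 else 1) + (if J = ∅ then 0 else 1) < k
          then w ^ #J * z ^ #(M \ J) else 0) = w ^ #M + z ^ #M := by
      intro z w
      rw [sum_eq_add M ∅ hM₀ (fun J _ hJ => if_neg (by rw [if_neg hJ.1, if_neg hJ.2]; omega))
        (fun h => absurd (mem_powerset_self M) h) (fun h => absurd (empty_mem_powerset M) h)]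
      simp [hM₀, Ne.symm hM₀, h1]
    rw [hends, hends, add_comm, add_comm (y ^ _)]
    exact pow_add_pow_le_of_balanced hs hx hy hx_top _
  · have hnone : ∀ J ∈ M.powerset,
        ¬ d + (if J = M then 0 else 1) + (if J = ∅ then 0 else 1) < k := by
      intro J _
      by_cases hJM : J = M
      · rw [if_pos hJM, if_neg (hJM ▸ hM₀)]
        omega
      · rw [if_neg hJM]
        omega
    simp [sum_ite_of_false hnone]

end Balancing

section Words

variable {ι α : Type*} [Fintype ι] [DecidableEq ι] [DecidableEq α] {i j : α}

lemma sum_eq_sum_sum_piecewise [Fintype α] {β : Type*} [AddCommMonoid β] (hij : i ≠ j)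
    (f : (ι → α) → β) :
    ∑ a, f a = ∑ b with ∀ t, b t ≠ j, ∑ J ∈ ({t | b t = i} : Finset ι).powerset,
      f (J.piecewise (fun _ => j) b) := by
  have hrecover : ∀ a : ι → α, ({t | a t = j} : Finset ι).piecewise (fun _ => j)
      (fun t => if a t = j then i else a t) = a := by
    intro a
    funext t
    by_cases h : a t = j <;> simp [Finset.piecewise, h]
  rw [sum_sigma']
  refine sum_nbij' (fun a => ⟨fun t => if a t = j then i else a t, ({t | a t = j} : Finset ι)⟩)
    (fun x => x.2.piecewise (fun _ => j) x.1) ?_ (fun _ _ => mem_univ _) (fun a _ => hrecover a)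
    ?_ (fun a _ => by rw [hrecover])
  · intro a _
    simp only [mem_sigma, mem_filter, mem_univ, true_and, mem_powerset]
    refine ⟨fun t => ?_, fun t ht => ?_⟩
    · split_ifs with h <;> [exact hij; exact h]
    · simp_all
  · rintro ⟨b, J⟩ hx
    simp only [mem_sigma, mem_filter, mem_univ, true_and, mem_powerset] at hx
    obtain ⟨hbj, hJ⟩ := hx
    have hJi : ∀ t ∈ J, b t = i := fun t ht => by simpa using hJ ht
    ext1
    · funext t
      by_cases h : t ∈ J <;> simp [Finset.piecewise, h, hbj, hJi]
    · apply heq_of_eq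
      ext t
      by_cases h : t ∈ J <;> simp [h, hbj]

variable {b : ι → α} {J : Finset ι}

lemma image_piecewise (hJ : J ⊆ ({t | b t = i} : Finset ι)) :
    univ.image (J.piecewise (fun _ => j) b) =
      (univ.image b).erase i ∪ (if J = ({t | b t = i} : Finset ι) then ∅ else {i}) ∪
        (if J = ∅ then ∅ else {j}) := by
  have hJi : ∀ t ∈ J, b t = i := fun t ht => by simpa using hJ ht
  ext x
  simp only [mem_image, mem_univ, true_and, mem_union, mem_erase]
  constructor
  · rintro ⟨t, rfl⟩
    by_cases htJ : t ∈ J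
    · right
      simp [htJ, ne_empty_of_mem htJ]
    · by_cases hbt : b t = i
      · left; right
        have : J ≠ ({t | b t = i} : Finset ι) := fun h => htJ (h ▸ by simpa using hbt)
        simp [htJ, this, hbt]
      · left; left
        simp [htJ, hbt]
  · rintro ((⟨hxi, t, rfl⟩ | hx) | hx)
    · have htJ : t ∉ J := fun h => hxi (hJi t h)
      exact ⟨t, by simp [htJ]⟩
    · split_ifs at hx with hJM
      · simp at hx
      · obtain ⟨t, htM, htJ⟩ : ∃ t ∈ ({t | b t = i} : Finset ι), t ∉ J := by
          by_contra! h
          exact hJM (subset_antisymm hJ h)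
        exact ⟨t, by simp_all⟩
    · split_ifs at hx with hJ₀
      · simp at hx
      · obtain ⟨t, ht⟩ := nonempty_iff_ne_empty.mpr hJ₀
        exact ⟨t, by simp_all⟩

lemma card_image_piecewise (hij : i ≠ j) (hbj : ∀ t, b t ≠ j)
    (hJ : J ⊆ ({t | b t = i} : Finset ι)) :
    #(univ.image (J.piecewise (fun _ => j) b)) = #((univ.image b).erase i)
      + (if J = ({t | b t = i} : Finset ι) then 0 else 1) + (if J = ∅ then 0 else 1) := by
  have hj : j ∉ (univ.image b).erase i := by simp [hbj]
  rw [image_piecewise hJ]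
  split_ifs <;> simp [hij, hj]

lemma prod_piecewise_eq (p : α → ℝ≥0∞) (hJ : J ⊆ ({t | b t = i} : Finset ι)) :
    ∏ t, p (J.piecewise (fun _ => j) b t) =
      (∏ t with b t ≠ i, p (b t)) * (p j ^ #J * p i ^ #(({t | b t = i} : Finset ι) \ J)) := by
  simp only [Finset.piecewise, apply_ite p]
  rw [prod_ite, filter_mem_eq_inter, univ_inter, prod_const,
    ← prod_filter_mul_prod_filter_not ({t | t ∉ J} : Finset ι) (fun t => b t ≠ i)]
  have hout : ({t | t ∉ J} : Finset ι).filter (fun t => b t ≠ i) =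
      ({t | b t ≠ i} : Finset ι) := by
    ext t
    have := @hJ t
    simp only [mem_filter, mem_univ, true_and] at this ⊢
    tauto
  have hin : ({t | t ∉ J} : Finset ι).filter (fun t => ¬ b t ≠ i) =
      ({t | b t = i} : Finset ι) \ J := by
    ext t
    simp only [mem_filter, mem_univ, true_and, mem_sdiff, not_not]
    tauto
  rw [hout, hin, prod_eq_pow_card (s := ({t | b t = i} : Finset ι) \ J) (b := p i)
    fun t ht => by simp_all]
  ring

end Words

section Smoothing

variable {α : Type*} [Fintype α]

lemma sum_eq_sum_of_eq_off_pair [DecidableEq α] {M : Type*} [AddCommMonoid M] {f g : α → M}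
    {i j : α} (hij : i ≠ j) (hfg : ∀ l, l ≠ i → l ≠ j → f l = g l)
    (hs : f i + f j = g i + g j) : ∑ l, f l = ∑ l, g l := by
  rw [← sum_add_sum_compl {i, j} f, ← sum_add_sum_compl {i, j} g, sum_pair hij, sum_pair hij,
    hs]
  refine congrArg _ (sum_congr rfl fun l hl => ?_)
  simp only [mem_compl, mem_insert, mem_singleton, not_or] at hl
  exact hfg l hl.1 hl.2

lemma exists_lt_of_sum_eq_of_ne {f g : α → ℝ≥0∞} (hfg : ∑ l, f l = ∑ l, g l)
    (hg : ∑ l, g l ≠ ∞) (hne : f ≠ g) : ∃ l, f l < g l := by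
  classical
  by_contra! hle
  obtain ⟨l, hl⟩ := Function.ne_iff.mp hne
  have hlt : ∑ l, g l < ∑ l, f l := by
    rw [← add_sum_erase univ g (mem_univ l), ← add_sum_erase univ f (mem_univ l)]
    refine ENNReal.add_lt_add_of_lt_of_le ?_ ((hle l).lt_of_ne' hl) (sum_le_sum fun l _ => hle l)
    exact ne_top_of_le_ne_top hg (sum_le_sum_of_subset (erase_subset _ _))
  exact hlt.ne hfg.symm

variable [DecidableEq α]

variable (ι : Type*) [Fintype ι] [DecidableEq ι] in
noncomputable def fewValuesMass (p : α → ℝ≥0∞) (k : ℕ) : ℝ≥0∞ :=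
  ∑ a : ι → α with #(univ.image a) < k, ∏ t, p (a t)

variable {ι : Type*} [Fintype ι] [DecidableEq ι]

theorem fewValuesMass_le_of_balanced {p q : α → ℝ≥0∞} {i j : α} (hij : i ≠ j)
    (hqp : ∀ l, l ≠ i → l ≠ j → q l = p l) (hs : q i + q j = p i + p j)
    (hi : p i ≤ q i) (hj : p i ≤ q j) (hi_top : p i ≠ ∞) (k : ℕ) :
    fewValuesMass ι q k ≤ fewValuesMass ι p k := by
  rw [fewValuesMass, fewValuesMass, sum_filter, sum_filter, sum_eq_sum_sum_piecewise hij,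
    sum_eq_sum_sum_piecewise hij]
  refine sum_le_sum fun b hb => ?_
  have hbj : ∀ t, b t ≠ j := (mem_filter.mp hb).2
  have hfiber : ∀ w : α → ℝ≥0∞,
      ∑ J ∈ ({t | b t = i} : Finset ι).powerset,
        (if #(univ.image (J.piecewise (fun _ => j) b)) < k
          then ∏ t, w (J.piecewise (fun _ => j) b t) else 0) =
      (∏ t with b t ≠ i, w (b t)) * ∑ J ∈ ({t | b t = i} : Finset ι).powerset,
        (if #((univ.image b).erase i) + (if J = ({t | b t = i} : Finset ι) then 0 else 1)
            + (if J = ∅ then 0 else 1) < k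
          then w j ^ #J * w i ^ #(({t | b t = i} : Finset ι) \ J) else 0) := by
    intro w
    rw [mul_sum]
    refine sum_congr rfl fun J hJ => ?_
    rw [card_image_piecewise hij hbj (mem_powerset.mp hJ),
      prod_piecewise_eq w (mem_powerset.mp hJ), mul_ite, mul_zero]
  have hrest : ∏ t with b t ≠ i, q (b t) = ∏ t with b t ≠ i, p (b t) :=
    prod_congr rfl fun t ht => hqp _ (mem_filter.mp ht).2 (hbj t)
  rw [hfiber, hfiber, hrest]
  gcongr _ * ?_
  exact sum_powerset_ite_le_of_balanced _ _ k hs hi hj hi_top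

lemma exists_step_toward_uniform [Nonempty α] {p : α → ℝ≥0∞} (hp : ∑ l, p l = 1)
    (hpu : p ≠ fun _ => (Fintype.card α : ℝ≥0∞)⁻¹) :
    ∃ q : α → ℝ≥0∞, ∑ l, q l = 1 ∧
      #{l | q l ≠ (Fintype.card α : ℝ≥0∞)⁻¹} < #{l | p l ≠ (Fintype.card α : ℝ≥0∞)⁻¹} ∧
      ∀ k, fewValuesMass ι q k ≤ fewValuesMass ι p k := by
  set u : α → ℝ≥0∞ := fun _ => (Fintype.card α : ℝ≥0∞)⁻¹ with hu_def
  have hcard : (Fintype.card α : ℝ≥0∞) ≠ 0 := Nat.cast_ne_zero.mpr Fintype.card_ne_zero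
  have hu : ∑ l, u l = 1 := by
    simp [hu_def, ENNReal.mul_inv_cancel hcard (ENNReal.natCast_ne_top _)]
  obtain ⟨i, hi⟩ := exists_lt_of_sum_eq_of_ne (hp.trans hu.symm) (by simp [hu]) hpu
  obtain ⟨j, hj⟩ := exists_lt_of_sum_eq_of_ne (hu.trans hp.symm) (by simp [hp]) (Ne.symm hpu)
  have hij : i ≠ j := by
    rintro rfl
    exact (hi.trans hj).false
  set q := Function.update (Function.update p i (u i)) j (p i + p j - u i) with hq_def
  have hqi : q i = u i := by simp [hq_def, hij]
  have hqj : q j = p i + p j - u i := by simp [hq_def]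
  have hqp : ∀ l, l ≠ i → l ≠ j → q l = p l := fun l hli hlj => by simp [hq_def, hli, hlj]
  have hs : q i + q j = p i + p j := by
    rw [hqi, hqj, add_tsub_cancel_of_le (hj.le.trans le_add_self)]
  have hqj_ge : p i ≤ q j :=
    hqj ▸ ENNReal.le_sub_of_add_le_left (ENNReal.inv_ne_top.mpr hcard)
      (by rw [add_comm]; exact add_le_add_right hj.le _)
  have hcount : #{l | q l ≠ u l} < #{l | p l ≠ u l} := by
    refine card_lt_card ⟨fun l hl => ?_, fun hsub => ?_⟩
    · simp only [mem_filter, mem_univ, true_and] at hl ⊢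
      by_cases hli : l = i
      · exact absurd (hli ▸ hqi) hl
      by_cases hlj : l = j
      · exact hlj ▸ hj.ne'
      · rwa [← hqp l hli hlj]
    · exact (mem_filter.mp (hsub (mem_filter.mpr ⟨mem_univ i, hi.ne⟩))).2 hqi
  exact ⟨q, by rw [sum_eq_sum_of_eq_off_pair hij hqp hs, hp], hcount,
    fewValuesMass_le_of_balanced hij hqp hs (hqi ▸ hi.le) hqj_ge (hi.trans_le le_top).ne⟩

theorem fewValuesMass_uniform_le {p : α → ℝ≥0∞} (hp : ∑ l, p l = 1) (k : ℕ) :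
    fewValuesMass ι (fun _ : α => (Fintype.card α : ℝ≥0∞)⁻¹) k ≤
      fewValuesMass ι p k := by
  obtain ⟨l, -, -⟩ := exists_ne_zero_of_sum_ne_zero (hp ▸ one_ne_zero : ∑ l, p l ≠ 0)
  have : Nonempty α := ⟨l⟩
  induction h : #{l | p l ≠ (Fintype.card α : ℝ≥0∞)⁻¹} using Nat.strong_induction_on
    generalizing p with
  | _ c ih =>
  by_cases hpu : p = fun _ => (Fintype.card α : ℝ≥0∞)⁻¹
  · rw [hpu]
  obtain ⟨q, hq, hcount, hqp⟩ := exists_step_toward_uniform (ι := ι) hp hpu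
  exact (ih _ (h ▸ hcount) hq rfl).trans (hqp k)

end Smoothing

section Measure

variable {α : Type*} [Fintype α] [MeasurableSpace α] [MeasurableSingletonClass α]

lemma measurableSet_preimage_restrict {r : ℕ} (s : Set (Fin r → α)) :
    MeasurableSet ((fun (ω : ℕ → α) (t : Fin r) => ω t) ⁻¹' s) :=
  measurable_pi_lambda _ (fun _ => measurable_pi_apply _) s.toFinite.measurableSet

lemma measure_preimage_restrict_eq_sum {μ : Measure (ℕ → α)} {p : α → ℝ≥0∞} {r : ℕ}
    (hμ : ∀ a : Fin r → α, μ {ω | ∀ t : Fin r, ω t = a t} = ∏ t, p (a t))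
    (s : Finset (Fin r → α)) :
    μ ((fun ω (t : Fin r) => ω t) ⁻¹' s) = ∑ a ∈ s, ∏ t, p (a t) := by
  rw [← sum_measure_preimage_singleton s fun a _ => measurableSet_preimage_restrict {a}]
  refine sum_congr rfl fun a _ => ?_
  rw [← hμ a]
  congr 1
  ext ω
  simp [funext_iff]

lemma lintegral_firstTime_card_image_eq [DecidableEq α] {μ : Measure (ℕ → α)}
    {p : α → ℝ≥0∞} (k : ℕ)
    (hμ : ∀ (m : ℕ) (a : Fin m → α), μ {ω | ∀ t : Fin m, ω t = a t} = ∏ t, p (a t)) :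
    ∫⁻ ω, firstTime (fun r ω => k ≤ #(univ.image fun t : Fin r => ω t)) ω ∂μ =
      1 + ∑' r, fewValuesMass (Fin (r + 1)) p k := by
  have hmono : ∀ ω : ℕ → α,
      Monotone fun r => k ≤ #(univ.image fun t : Fin r => ω t) := by
    intro ω r r' hr h
    refine h.trans (card_le_card fun x hx => ?_)
    obtain ⟨t, -, rfl⟩ := mem_image.mp hx
    exact mem_image.mpr ⟨Fin.castLE hr t, mem_univ _, rfl⟩
  have hfew : ∀ r : ℕ, {ω : ℕ → α | ¬ k ≤ #(univ.image fun t : Fin r => ω t)} =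
      (fun ω (t : Fin r) => ω t) ⁻¹'
        ↑({a | #(univ.image a) < k} : Finset (Fin r → α)) := by
    intro r
    ext ω
    simp
  have huniv : μ Set.univ = 1 := by simpa using hμ 0 Fin.elim0
  simp_rw [firstTime_eq_one_add_tsum hmono, hfew]
  rw [lintegral_add_left measurable_const, lintegral_const, huniv, one_mul,
    lintegral_tsum fun r =>
      (measurable_one.indicator (measurableSet_preimage_restrict _)).aemeasurable]
  congr 1
  refine tsum_congr fun r => ?_
  rw [lintegral_indicator_one (measurableSet_preimage_restrict _),
    measure_preimage_restrict_eq_sum (hμ _), fewValuesMass]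

end Measure

end CouponCollector

theorem uniform_minimizes_expected_coverage_depth_general (n k : ℕ)
    (p : Fin n → ℝ≥0∞) (hp : ∑ i, p i = 1) (μp μu : Measure (ℕ → Fin n))
    (hμp : ∀ (m : ℕ) (a : Fin m → Fin n),
      μp {ω : ℕ → Fin n | ∀ i : Fin m, ω (i : ℕ) = a i} = ∏ i : Fin m, p (a i))
    (hμu : ∀ (m : ℕ) (a : Fin m → Fin n),
      μu {ω : ℕ → Fin n | ∀ i : Fin m, ω (i : ℕ) = a i} = ∏ _i : Fin m, ((n : ℝ≥0∞))⁻¹) :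
    ∫⁻ ω, firstTime
        (fun r ω => k ≤ ((Finset.univ : Finset (Fin r)).image (fun j => ω (j : ℕ))).card) ω ∂μu ≤
      ∫⁻ ω, firstTime
        (fun r ω => k ≤ ((Finset.univ : Finset (Fin r)).image (fun j => ω (j : ℕ))).card) ω ∂μp := by
  rw [CouponCollector.lintegral_firstTime_card_image_eq (p := fun _ => (n : ℝ≥0∞)⁻¹) k
      hμu,
    CouponCollector.lintegral_firstTime_card_image_eq k hμp]
  gcongr with r
  simpa using CouponCollector.fewValuesMass_uniform_le (ι := Fin (r + 1)) hp k

/-- Let `n ≥ k ≥ 1`.  For a probability mass function `p` on `[n]`, let `T_k^p` be the least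
`r ≥ 1` such that at least `k` distinct values appear among the first `r` coordinates of the
coordinate process on `[n]^ℕ`, equipped with the infinite product measure `μp` of `p`
(characterized by its values on cylinder sets).  Then `E[T_k^p] ≥ E[T_k^u]`, where
`u = (1/n,…,1/n)` is the uniform distribution (with product measure `μu`), expectations being
taken in `[0,∞]`: the uniform distribution minimizes the expected coverage sample size. -/
theorem uniform_minimizes_expected_coverage_depth (n k : ℕ) (hk : 1 ≤ k) (hkn : k ≤ n)
    (p : Fin n → ℝ≥0∞) (hp : ∑ i, p i = 1) (μp μu : Measure (ℕ → Fin n))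
    (hμp : ∀ (m : ℕ) (a : Fin m → Fin n),
      μp {ω : ℕ → Fin n | ∀ i : Fin m, ω (i : ℕ) = a i} = ∏ i : Fin m, p (a i))
    (hμu : ∀ (m : ℕ) (a : Fin m → Fin n),
      μu {ω : ℕ → Fin n | ∀ i : Fin m, ω (i : ℕ) = a i} = ∏ _i : Fin m, ((n : ℝ≥0∞))⁻¹) :
    ∫⁻ ω, firstTime
        (fun r ω => k ≤ ((Finset.univ : Finset (Fin r)).image (fun j => ω (j : ℕ))).card) ω ∂μu ≤
      ∫⁻ ω, firstTime
        (fun r ω => k ≤ ((Finset.univ : Finset (Fin r)).image (fun j => ω (j : ℕ))).card) ω ∂μp :=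
  uniform_minimizes_expected_coverage_depth_general n k p hp μp μu hμp hμu
end

section
/- Fix integers n ≥ 2 and k with 2 ≤ k ≤ n, and a real v > 0. For positive reals p₁,…,pₙ define g(p₁,…,pₙ) = Σ_{q=0}^{k-1} Σ_{I ⊆ [n], |I| = q} Π_{i∈I} (e^{p_i v} − 1). Let p'₁ = p'₂ = (p₁+p₂)/2 and p'_i = p_i for 3 ≤ i ≤ n. Then g(p₁,…,pₙ) − g(p'₁,…,p'ₙ) = (e^{p₁v/2} − e^{p₂v/2})² · Σ_{I ⊆ [n]∖{1,2}, |I| = k−2} Π_{i∈I} (e^{p_i v} − 1). In particular, if p₁ ≠ p₂ then g(p₁,…,pₙ) > g(p'₁,…,p'ₙ). -/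
/-!
With `xᵢ = e^{pᵢ v} − 1`, `g` is the sum `T_k` of the elementary symmetric functions
`e₀, …, e_{k-1}` of the `xᵢ`. Peeling off `x₁, x₂` gives
`T_k(x) = T_k(y) + (x₁ + x₂) T_{k-1}(y) + x₁ x₂ T_{k-2}(y)`, where `y` is the list of the other
coordinates. With `A = e^{p₁ v/2}` and `B = e^{p₂ v/2}` we have `x₁ = A² − 1`, `x₂ = B² − 1`,
and averaging `p₁, p₂` replaces both by `AB − 1`; the difference is then the ring identity
`(A − B)² (T_{k-1}(y) − T_{k-2}(y)) = (A − B)² e_{k-2}(y)`.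
-/

open Finset

/-- `g(p₁,…,pₙ) = Σ_{q=0}^{k-1} Σ_{I ⊆ [n], |I| = q} Π_{i∈I} (e^{p_i v} − 1)`, the integrand
appearing in the integral formula for the expected coupon-collector sample size. -/
noncomputable def gFun (n k : ℕ) (v : ℝ) (p : Fin n → ℝ) : ℝ :=
  ∑ q ∈ Finset.range k, ∑ I ∈ Finset.powersetCard q (Finset.univ : Finset (Fin n)),
    ∏ i ∈ I, (Real.exp (p i * v) - 1)

namespace Multiset

section CommSemiring

variable {R : Type*} [CommSemiring R]

theorem esymm_zero_right (s : Multiset R) : s.esymm 0 = 1 := by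
  simp [esymm, powersetCard_zero_left]

theorem esymm_cons_succ (a : R) (s : Multiset R) (q : ℕ) :
    (a ::ₘ s).esymm (q + 1) = s.esymm (q + 1) + a * s.esymm q := by
  simp [esymm, powersetCard_cons, map_map, sum_map_mul_left]

def sumEsymm (s : Multiset R) (k : ℕ) : R := ∑ q ∈ Finset.range k, s.esymm q

theorem sumEsymm_succ (s : Multiset R) (k : ℕ) :
    s.sumEsymm (k + 1) = s.sumEsymm k + s.esymm k :=
  Finset.sum_range_succ _ _

theorem sumEsymm_cons_succ (a : R) (s : Multiset R) (k : ℕ) :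
    (a ::ₘ s).sumEsymm (k + 1) = s.sumEsymm (k + 1) + a * s.sumEsymm k := by
  simp only [sumEsymm, Finset.sum_range_succ', esymm_cons_succ, Finset.sum_add_distrib,
    Finset.mul_sum, esymm_zero_right]
  ring

theorem sumEsymm_cons_cons (a b : R) (s : Multiset R) (m : ℕ) :
    (a ::ₘ b ::ₘ s).sumEsymm (m + 2) =
      s.sumEsymm (m + 2) + (a + b) * s.sumEsymm (m + 1) + a * b * s.sumEsymm m := by
  rw [sumEsymm_cons_succ, sumEsymm_cons_succ, sumEsymm_cons_succ]
  ring

end CommSemiring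

theorem sumEsymm_sq_sub_one_sub_sumEsymm_mul_sub_one {R : Type*} [CommRing R] (a b : R)
    (s : Multiset R) (m : ℕ) :
    ((a ^ 2 - 1) ::ₘ (b ^ 2 - 1) ::ₘ s).sumEsymm (m + 2) -
        ((a * b - 1) ::ₘ (a * b - 1) ::ₘ s).sumEsymm (m + 2) =
      (a - b) ^ 2 * s.esymm m := by
  rw [sumEsymm_cons_cons, sumEsymm_cons_cons, sumEsymm_succ s m]
  ring

end Multiset

theorem Finset.sum_powersetCard_prod_pos {ι R : Type*} [CommSemiring R] [PartialOrder R]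
    [IsStrictOrderedRing R] {s : Finset ι} {f : ι → R} (hf : ∀ i ∈ s, 0 < f i) {q : ℕ}
    (hq : q ≤ s.card) : 0 < ∑ I ∈ s.powersetCard q, ∏ i ∈ I, f i :=
  sum_pos (fun _ hI => prod_pos fun i hi => hf i ((mem_powersetCard.1 hI).1 hi))
    (powersetCard_nonempty.2 hq)

theorem Finset.map_univ_val_eq_cons_cons {ι α : Type*} [Fintype ι] [DecidableEq ι] (f : ι → α)
    {a b : ι} (hab : a ≠ b) :
    univ.val.map f = f a ::ₘ f b ::ₘ (univ \ {a, b}).val.map f := by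
  have ha : a ∉ insert b (univ \ {a, b}) := by simp [hab]
  have hb : b ∉ univ \ {a, b} := by simp
  rw [← Multiset.map_cons, ← Multiset.map_cons, ← insert_val_of_notMem hb,
    ← insert_val_of_notMem ha]
  congr
  ext x
  by_cases x = a <;> by_cases x = b <;> simp_all

theorem gFun_eq_sumEsymm (n k : ℕ) (v : ℝ) (p : Fin n → ℝ) :
    gFun n k v p = (univ.val.map fun i => Real.exp (p i * v) - 1).sumEsymm k := by
  simp only [gFun, Multiset.sumEsymm, esymm_map_val]

/-- Fix `n ≥ 2`, `2 ≤ k ≤ n` and `v > 0`.  For positive reals `p₁,…,pₙ`, replacing `p₁, p₂` by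
their average `(p₁+p₂)/2` (leaving the other coordinates unchanged) changes `g` by
`(e^{p₁v/2} − e^{p₂v/2})² · Σ_{I ⊆ [n]∖{1,2}, |I| = k−2} Π_{i∈I}(e^{p_i v} − 1)`;
in particular, if `p₁ ≠ p₂` then `g` strictly decreases. -/
theorem symmetrization_identity (n k : ℕ) (hk : 2 ≤ k) (hkn : k ≤ n)
    (v : ℝ) (hv : 0 < v) (p : Fin n → ℝ) (hp : ∀ i, 0 < p i) :
    (gFun n k v p -
        gFun n k v (fun i =>
          if i = (⟨0, by omega⟩ : Fin n) ∨ i = (⟨1, by omega⟩ : Fin n) then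
            (p ⟨0, by omega⟩ + p ⟨1, by omega⟩) / 2
          else p i) =
      (Real.exp (p ⟨0, by omega⟩ * v / 2) - Real.exp (p ⟨1, by omega⟩ * v / 2)) ^ 2 *
        ∑ I ∈ Finset.powersetCard (k - 2)
            ((Finset.univ : Finset (Fin n)) \ {⟨0, by omega⟩, ⟨1, by omega⟩}),
          ∏ i ∈ I, (Real.exp (p i * v) - 1)) ∧
    (p ⟨0, by omega⟩ ≠ p ⟨1, by omega⟩ →
      gFun n k v (fun i =>
          if i = (⟨0, by omega⟩ : Fin n) ∨ i = (⟨1, by omega⟩ : Fin n) then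
            (p ⟨0, by omega⟩ + p ⟨1, by omega⟩) / 2
          else p i) < gFun n k v p) := by
  obtain ⟨m, rfl⟩ : ∃ m, k = m + 2 := ⟨k - 2, by omega⟩
  set a : Fin n := ⟨0, by omega⟩
  set b : Fin n := ⟨1, by omega⟩
  have hab : a ≠ b := by simp [a, b, Fin.ext_iff]
  set p' : Fin n → ℝ := fun i => if i = a ∨ i = b then (p a + p b) / 2 else p i
  set A := Real.exp (p a * v / 2)
  set B := Real.exp (p b * v / 2)
  have h_sq (i : Fin n) : Real.exp (p i * v) = Real.exp (p i * v / 2) ^ 2 := by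
    rw [← Real.exp_nat_mul]; ring_nf
  have h_mean (i : Fin n) (hi : i = a ∨ i = b) : Real.exp (p' i * v) = A * B := by
    simp only [p', if_pos hi, A, B, ← Real.exp_add]; ring_nf
  have h_rest : (univ \ {a, b}).val.map (fun i => Real.exp (p' i * v) - 1) =
      (univ \ {a, b}).val.map (fun i => Real.exp (p i * v) - 1) :=
    Multiset.map_congr rfl fun i hi => by
      rw [Finset.mem_val, mem_sdiff, mem_insert, mem_singleton] at hi
      simp only [p', if_neg hi.2]
  have h_diff : gFun n (m + 2) v p - gFun n (m + 2) v p' =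
      (A - B) ^ 2 * ∑ I ∈ powersetCard m (univ \ {a, b}), ∏ i ∈ I, (Real.exp (p i * v) - 1) := by
    rw [gFun_eq_sumEsymm, gFun_eq_sumEsymm, map_univ_val_eq_cons_cons _ hab,
      map_univ_val_eq_cons_cons _ hab, h_rest, h_sq a, h_sq b, h_mean a (.inl rfl),
      h_mean b (.inr rfl), Multiset.sumEsymm_sq_sub_one_sub_sumEsymm_mul_sub_one, esymm_map_val]
  refine ⟨h_diff, fun hne => sub_pos.1 (h_diff ▸ mul_pos ?_ ?_)⟩
  · have : A ≠ B := fun h => hne (by simpa [hv.ne'] using Real.exp_injective h)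
    exact sq_pos_of_ne_zero (sub_ne_zero.2 this)
  · refine sum_powersetCard_prod_pos (fun i _ => by simpa using mul_pos (hp i) hv) ?_
    rw [card_sdiff_of_subset (subset_univ _), card_univ, Fintype.card_fin, card_pair hab]
    omega
end

section
/- Let n ≥ k ≥ 1 be integers. For any probability mass function p on [n] = {1,…,n}, let T_k^p be the least r ≥ 1 such that at least k distinct values appear among the first r terms of an i.i.d. sequence distributed according to p. Then E[T_k^p] ≥ Σ_{i=0}^{k-1} n/(n−i), and equality holds when p is the uniform distribution on [n], i.e., E[T_k^u] = Σ_{i=0}^{k-1} n/(n−i) = n(H_n − H_{n−k}). -/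
open MeasureTheory Finset
open scoped ENNReal

/-- The `m`-th harmonic number `H_m = Σ_{j=1}^m 1/j`. -/
noncomputable def harmonicNumber (m : ℕ) : ℝ := ∑ j ∈ Finset.range m, 1 / ((j : ℝ) + 1)

theorem firstTime_eq_tsum {Ω : Type*} {cond : ℕ → Ω → Prop} {ω : Ω}
    (hmono : Monotone (cond · ω)) (h0 : ¬ cond 0 ω) :
    firstTime cond ω = ∑' m, {ω | ¬ cond m ω}.indicator 1 ω := by
  classical
  simp only [Set.indicator_apply, Set.mem_ofPred_eq, Pi.one_apply]
  by_cases hex : ∃ r, cond r ω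
  · have hlt (m : ℕ) : ¬ cond m ω ↔ m < Nat.find hex :=
      ⟨fun h => not_le.1 fun hle => h (hmono hle (Nat.find_spec hex)), Nat.find_min hex⟩
    simp only [hlt]
    rw [tsum_eq_sum (s := range (Nat.find hex)) fun m hm => if_neg (by simpa using hm)]
    simp only [← mem_range, sum_ite_mem, inter_self, sum_const, card_range, nsmul_one]
    refine le_antisymm (sInf_le ⟨_, rfl, ?_, Nat.find_spec hex⟩) (le_sInf ?_)
    · exact Nat.one_le_iff_ne_zero.2 fun h => h0 (h ▸ Nat.find_spec hex)
    · rintro _ ⟨r, rfl, -, hr⟩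
      exact_mod_cast Nat.find_min' hex hr
  · push Not at hex
    simp only [hex, not_false_eq_true, if_true]
    have hempty : {x : ℝ≥0∞ | ∃ r : ℕ, x = r ∧ 1 ≤ r ∧ cond r ω} = ∅ :=
      Set.eq_empty_of_forall_notMem fun _ ⟨r, _, _, hr⟩ ↦ hex r hr
    rw [ENNReal.tsum_const_eq_top_of_ne_zero one_ne_zero, firstTime, hempty, sInf_empty]

theorem lintegral_firstTime {Ω : Type*} [MeasurableSpace Ω] (μ : Measure Ω)
    {cond : ℕ → Ω → Prop} (hmono : ∀ ω, Monotone (cond · ω)) (h0 : ∀ ω, ¬ cond 0 ω)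
    (hmeas : ∀ m, MeasurableSet {ω | cond m ω}) :
    ∫⁻ ω, firstTime cond ω ∂μ = ∑' m, μ {ω | ¬ cond m ω} := by
  have hmeas' (m : ℕ) : MeasurableSet {ω | ¬ cond m ω} := (hmeas m).compl
  rw [lintegral_congr fun ω => firstTime_eq_tsum (hmono ω) (h0 ω),
    lintegral_tsum fun m => (measurable_one.indicator (hmeas' m)).aemeasurable]
  exact tsum_congr fun m => lintegral_indicator_one (hmeas' m)

namespace CouponCollector

variable {α : Type*}

theorem image_univ_cons [DecidableEq α] {m : ℕ} (x : α) (b : Fin m → α) :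
    univ.image (Fin.cons x b : Fin (m + 1) → α) = insert x (univ.image b) := by
  ext y
  simp [Fin.exists_fin_succ, eq_comm]

theorem insert_eq_iff_of_mem [DecidableEq α] {x : α} {S I : Finset α} (hx : x ∈ S) :
    insert x I = S ↔ I = S ∨ I = S.erase x := by
  constructor
  · rintro rfl
    by_cases hxI : x ∈ I
    · exact .inl (insert_eq_of_mem hxI).symm
    · exact .inr (erase_insert hxI).symm
  · rintro (rfl | rfl)
    exacts [insert_eq_of_mem hx, insert_erase hx]

theorem sum_card_lt_eq_sum_range_sum_powersetCard [Fintype α] {M : Type*} [AddCommMonoid M]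
    (f : Finset α → M) (k : ℕ) :
    ∑ S with #S < k, f S = ∑ j ∈ range k, ∑ S ∈ powersetCard j univ, f S := by
  rw [← sum_fiberwise_of_maps_to (g := card) (t := range k) fun S hS =>
    mem_range.2 (mem_filter.1 hS).2]
  refine sum_congr rfl fun j hj => ?_
  rw [powersetCard_eq_filter, powerset_univ, filter_filter]
  exact sum_congr (filter_congr fun S _ => ⟨And.right, fun h => ⟨h ▸ mem_range.1 hj, h⟩⟩)
    fun _ _ => rfl

theorem measure_restrict_mem [MeasurableSpace α] [MeasurableSingletonClass α]
    {p : α → ℝ≥0∞} {μ : Measure (ℕ → α)}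
    (hμ : ∀ (m : ℕ) (a : Fin m → α), μ {ω | ∀ i : Fin m, ω i = a i} = ∏ i, p (a i))
    {m : ℕ} (s : Finset (Fin m → α)) :
    μ {ω | (fun i : Fin m => ω i) ∈ s} = ∑ a ∈ s, ∏ i, p (a i) := by
  have hf : Measurable fun (ω : ℕ → α) (i : Fin m) => ω i :=
    measurable_pi_lambda _ fun i => measurable_pi_apply _
  change μ ((fun (ω : ℕ → α) (i : Fin m) => ω i) ⁻¹' s) = _
  rw [← sum_measure_preimage_singleton s fun a _ => hf (measurableSet_singleton a)]
  refine sum_congr rfl fun a _ => ?_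
  rw [← hμ m a]
  congr 1
  ext ω
  simp [funext_iff]

variable [Fintype α] [DecidableEq α]

theorem sum_powersetCard_succ_sum_erase {M : Type*} [AddCommMonoid M] (j : ℕ)
    (f : Finset α → α → M) :
    ∑ S ∈ powersetCard (j + 1) univ, ∑ x ∈ S, f (S.erase x) x =
      ∑ S ∈ powersetCard j univ, ∑ x ∈ Sᶜ, f S x := by
  rw [sum_sigma', sum_sigma']
  refine sum_nbij' (fun z => ⟨z.1.erase z.2, z.2⟩) (fun z => ⟨insert z.2 z.1, z.2⟩)
    ?_ ?_ ?_ ?_ (fun _ _ => rfl)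
  · rintro ⟨S, x⟩ h
    simp only [mem_sigma, mem_powersetCard, subset_univ, true_and, mem_compl] at h ⊢
    simp [card_erase_of_mem h.2, h.1]
  · rintro ⟨S, x⟩ h
    simp only [mem_sigma, mem_powersetCard, subset_univ, true_and, mem_compl] at h ⊢
    simp [card_insert_of_notMem h.2, h.1]
  · rintro ⟨S, x⟩ h
    simp [insert_erase (mem_sigma.1 h).2]
  · rintro ⟨S, x⟩ h
    simp [erase_insert (mem_compl.1 (mem_sigma.1 h).2)]

def complMass {M : Type*} [AddCommMonoid M] (p : α → M) (S : Finset α) : M := ∑ x ∈ Sᶜ, p x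

theorem complMass_insert {G : Type*} [AddCommGroup G] (p : α → G) {S : Finset α} {x : α}
    (hx : x ∉ S) : complMass p (insert x S) = complMass p S - p x := by
  rw [complMass, compl_insert, sum_erase_eq_sub (mem_compl.2 hx), complMass]

theorem sum_mul_complMass_insert_mul_card_le (P : α → ℝ) (S : Finset α) :
    (∑ x ∈ Sᶜ, P x * complMass P (insert x S)) * #Sᶜ ≤ complMass P S ^ 2 * (#Sᶜ - 1) := by
  have hsum : ∑ x ∈ Sᶜ, P x * complMass P (insert x S) =
      complMass P S ^ 2 - ∑ x ∈ Sᶜ, P x ^ 2 := by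
    rw [sum_congr rfl fun x hx => by rw [complMass_insert P (mem_compl.1 hx)]]
    simp only [mul_sub, sum_sub_distrib, ← sum_mul, sq, complMass]
  have hCS : complMass P S ^ 2 ≤ #Sᶜ * ∑ x ∈ Sᶜ, P x ^ 2 := sq_sum_le_card_mul_sum_sq
  rw [hsum]
  linear_combination hCS

section Levels

def IsBalanced (P : α → ℝ) (k : ℕ) (ν : Finset α → ℝ) : Prop :=
  ∀ S : Finset α, #S < k →
    ν S * complMass P S = (if S = ∅ then 1 else 0) + ∑ x ∈ S, P x * ν (S.erase x)

variable {P : α → ℝ} {ν : Finset α → ℝ} {k : ℕ}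

namespace IsBalanced

theorem mul_complMass_of_mem_powersetCard_succ (hν : IsBalanced P k ν) {j : ℕ} (hj : j + 1 < k)
    {S : Finset α} (hS : S ∈ powersetCard (j + 1) univ) :
    ν S * complMass P S = ∑ x ∈ S, P x * ν (S.erase x) := by
  have hcard := (mem_powersetCard.1 hS).2
  rw [hν S (hcard ▸ hj), if_neg (by rintro rfl; simp at hcard), zero_add]

theorem sum_powersetCard_mul_complMass (hν : IsBalanced P k ν) :
    ∀ j < k, ∑ S ∈ powersetCard j univ, ν S * complMass P S = 1
  | 0, h0 => by simp [hν ∅ (by simpa using h0)]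
  | j + 1, hj => by
    rw [← hν.sum_powersetCard_mul_complMass j (by omega),
      sum_congr rfl fun S hS => hν.mul_complMass_of_mem_powersetCard_succ hj hS,
      sum_powersetCard_succ_sum_erase j fun S x => P x * ν S]
    simp only [complMass, mul_sum, mul_comm]

theorem sum_powersetCard_succ_mul_complMass_sq (hν : IsBalanced P k ν) {j : ℕ}
    (hj : j + 1 < k) :
    ∑ S ∈ powersetCard (j + 1) univ, ν S * complMass P S ^ 2 =
      ∑ S ∈ powersetCard j univ, ν S * ∑ x ∈ Sᶜ, P x * complMass P (insert x S) := by
  calc ∑ S ∈ powersetCard (j + 1) univ, ν S * complMass P S ^ 2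
      = ∑ S ∈ powersetCard (j + 1) univ, ∑ x ∈ S,
          P x * ν (S.erase x) * complMass P (insert x (S.erase x)) := by
        refine sum_congr rfl fun S hS => ?_
        rw [sq, ← mul_assoc, hν.mul_complMass_of_mem_powersetCard_succ hj hS, sum_mul]
        exact sum_congr rfl fun x hx => by rw [insert_erase hx]
    _ = _ := by
        rw [sum_powersetCard_succ_sum_erase j fun S x => P x * ν S * complMass P (insert x S)]
        simp only [mul_sum]
        exact sum_congr rfl fun S _ => sum_congr rfl fun x _ => by ring

theorem card_mul_sum_powersetCard_mul_complMass_sq_le (hν : IsBalanced P k ν)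
    (hP : ∑ x, P x = 1) (hν0 : ∀ S, 0 ≤ ν S) (hk : k ≤ Fintype.card α) :
    ∀ j < k, (Fintype.card α : ℝ) * ∑ S ∈ powersetCard j univ, ν S * complMass P S ^ 2 ≤
      Fintype.card α - j
  | 0, h0 => by
    have hq : complMass P ∅ = 1 := by simpa [complMass] using hP
    have hν_empty : ν ∅ = 1 := by simpa [hq] using hν ∅ (by simpa using h0)
    simp [hq, hν_empty]
  | j + 1, hj => by
    set n := Fintype.card α
    have hstep : (∑ S ∈ powersetCard (j + 1) univ, ν S * complMass P S ^ 2) * (n - j) ≤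
        (∑ S ∈ powersetCard j univ, ν S * complMass P S ^ 2) * (n - j - 1) := by
      rw [hν.sum_powersetCard_succ_mul_complMass_sq hj, sum_mul, sum_mul]
      refine sum_le_sum fun S hS => ?_
      have hcard : (#Sᶜ : ℝ) = n - j := by
        rw [card_compl, (mem_powersetCard.1 hS).2, Nat.cast_sub (by omega)]
      have := mul_le_mul_of_nonneg_left (sum_mul_complMass_insert_mul_card_le P S) (hν0 S)
      rw [hcard] at this
      linarith
    have ih := hν.card_mul_sum_powersetCard_mul_complMass_sq_le hP hν0 hk j (by omega)
    have hjn : (j : ℝ) + 1 < n := by exact_mod_cast hj.trans_le hk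
    push_cast
    nlinarith

theorem card_le_sum_powersetCard_mul (hν : IsBalanced P k ν) (hP : ∑ x, P x = 1)
    (hν0 : ∀ S, 0 ≤ ν S) (hk : k ≤ Fintype.card α) {j : ℕ} (hj : j < k) :
    (Fintype.card α : ℝ) ≤ (∑ S ∈ powersetCard j univ, ν S) * (Fintype.card α - j) := by
  have hCS := sum_sq_le_sum_mul_sum_of_sq_le_mul (powersetCard j univ)
    (r := fun S => ν S * complMass P S) (f := ν) (g := fun S => ν S * complMass P S ^ 2)
    (fun S _ => hν0 S) (fun S _ => mul_nonneg (hν0 S) (sq_nonneg _))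
    (fun S _ => le_of_eq (by ring))
  rw [hν.sum_powersetCard_mul_complMass j hj, one_pow] at hCS
  have hQ := hν.card_mul_sum_powersetCard_mul_complMass_sq_le hP hν0 hk j hj
  have hM : 0 ≤ ∑ S ∈ powersetCard j univ, ν S := sum_nonneg fun S _ => hν0 S
  nlinarith

end IsBalanced

end Levels

section Sojourn

variable (p : α → ℝ≥0∞)

noncomputable def rangeProb (m : ℕ) (S : Finset α) : ℝ≥0∞ :=
  ∑ a : Fin m → α with univ.image a = S, ∏ i, p (a i)

noncomputable def sojourn (S : Finset α) : ℝ≥0∞ := ∑' m, rangeProb p m S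

theorem rangeProb_zero (S : Finset α) : rangeProb p 0 S = if S = ∅ then 1 else 0 := by
  rw [rangeProb, sum_filter, Fintype.sum_unique]
  simp [eq_comm]

theorem rangeProb_succ (m : ℕ) (S : Finset α) :
    rangeProb p (m + 1) S =
      rangeProb p m S * ∑ x ∈ S, p x + ∑ x ∈ S, p x * rangeProb p m (S.erase x) := by
  have hcons : rangeProb p (m + 1) S = ∑ x, p x *
      ∑ b : Fin m → α with insert x (univ.image b) = S, ∏ i, p (b i) := by
    rw [rangeProb, sum_filter, ← Fintype.sum_equiv (Fin.consEquiv fun _ => α)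
      (fun z => if univ.image (Fin.cons z.1 z.2 : Fin (m + 1) → α) = S then
        ∏ i, p ((Fin.cons z.1 z.2 : Fin (m + 1) → α) i) else 0) _ fun _ => rfl,
      Fintype.sum_prod_type]
    simp only [image_univ_cons, Fin.prod_univ_succ, Fin.cons_zero, Fin.cons_succ, mul_sum,
      sum_filter, mul_ite, mul_zero]
  have hfiber (x : α) (hx : x ∈ S) :
      ∑ b : Fin m → α with insert x (univ.image b) = S, ∏ i, p (b i) =
        rangeProb p m S + rangeProb p m (S.erase x) := by
    rw [filter_congr fun b _ => insert_eq_iff_of_mem hx, filter_or, sum_union, rangeProb,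
      rangeProb]
    exact disjoint_filter.2 fun b _ h1 h2 => (erase_ne_self.2 hx) (h2.symm.trans h1)
  rw [hcons, ← sum_add_sum_compl S, sum_eq_zero (s := Sᶜ), add_zero]
  · rw [sum_congr rfl fun x hx => by rw [hfiber x hx], mul_sum, ← sum_add_distrib]
    exact sum_congr rfl fun x _ => by ring
  · intro x hx
    refine mul_eq_zero_of_right _ (sum_eq_zero fun b hb => ?_)
    have := (mem_filter.1 hb).2
    exact absurd (this ▸ mem_insert_self x _) (mem_compl.1 hx)

theorem rangeProb_le_pow (m : ℕ) (S : Finset α) : rangeProb p m S ≤ (∑ x ∈ S, p x) ^ m := by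
  calc rangeProb p m S ≤ ∑ a ∈ Fintype.piFinset fun _ : Fin m => S, ∏ i, p (a i) := by
        refine sum_le_sum_of_subset fun a ha => Fintype.mem_piFinset.2 fun i => ?_
        rw [← (mem_filter.1 ha).2]
        exact mem_image_of_mem a (mem_univ i)
    _ = (∑ x ∈ S, p x) ^ m := by rw [← prod_univ_sum, prod_const, card_univ, Fintype.card_fin]

theorem sojourn_eq (S : Finset α) :
    sojourn p S = (if S = ∅ then 1 else 0) +
      (sojourn p S * ∑ x ∈ S, p x + ∑ x ∈ S, p x * sojourn p (S.erase x)) := by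
  conv_lhs => rw [sojourn, tsum_eq_zero_add' ENNReal.summable, rangeProb_zero]
  simp only [rangeProb_succ, ENNReal.tsum_add, ENNReal.tsum_mul_right, ENNReal.tsum_mul_left,
    Summable.tsum_finsetSum fun _ _ => ENNReal.summable]
  rfl

theorem sojourn_mul_complMass (hp : ∑ x, p x = 1) {S : Finset α} (hS : sojourn p S ≠ ⊤) :
    sojourn p S * complMass p S =
      (if S = ∅ then 1 else 0) + ∑ x ∈ S, p x * sojourn p (S.erase x) := by
  have hfin : sojourn p S * ∑ x ∈ S, p x ≠ ⊤ :=
    ENNReal.mul_ne_top hS (ne_top_of_le_ne_top ENNReal.one_ne_top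
      (hp ▸ sum_le_univ_sum_of_nonneg fun _ => zero_le))
  refine (ENNReal.add_right_inj hfin).1 ?_
  rw [← mul_add, complMass, sum_add_sum_compl, hp, mul_one, add_left_comm, ← sojourn_eq]

theorem sojourn_ne_top {S : Finset α} (hS : ∑ x ∈ S, p x < 1) : sojourn p S ≠ ⊤ := by
  refine ne_top_of_le_ne_top ?_ (ENNReal.tsum_le_tsum (rangeProb_le_pow p · S))
  rw [ENNReal.tsum_geometric, Ne, ENNReal.inv_eq_top, tsub_eq_zero_iff_le, not_le]
  exact hS

end Sojourn

section Measure

variable [MeasurableSpace α] [MeasurableSingletonClass α] {p : α → ℝ≥0∞} {μ : Measure (ℕ → α)}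

theorem measure_card_image_lt
    (hμ : ∀ (m : ℕ) (a : Fin m → α), μ {ω | ∀ i : Fin m, ω i = a i} = ∏ i, p (a i))
    (k m : ℕ) :
    μ {ω | ¬ k ≤ (univ.image fun j : Fin m => ω j).card} = ∑ S with #S < k, rangeProb p m S := by
  rw [show {ω : ℕ → α | ¬ k ≤ (univ.image fun j : Fin m => ω j).card} =
      {ω | (fun i : Fin m => ω i) ∈ univ.filter fun a => #(univ.image a) < k} by ext; simp,
    measure_restrict_mem hμ,
    ← sum_fiberwise_of_maps_to (g := fun a => univ.image a) (t := univ.filter (#· < k))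
      fun a ha => by simpa using ha]
  refine sum_congr rfl fun S hS => ?_
  rw [rangeProb, filter_filter]
  refine sum_congr (filter_congr fun a _ => ?_) fun _ _ => rfl
  exact ⟨And.right, fun h => ⟨h ▸ (mem_filter.1 hS).2, h⟩⟩

theorem lintegral_firstTime_card_image
    (hμ : ∀ (m : ℕ) (a : Fin m → α), μ {ω | ∀ i : Fin m, ω i = a i} = ∏ i, p (a i))
    {k : ℕ} (hk : 1 ≤ k) :
    ∫⁻ ω, firstTime (fun r ω => k ≤ (univ.image fun j : Fin r => ω j).card) ω ∂μ =
      ∑ S with #S < k, sojourn p S := by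
  have hmono (ω : ℕ → α) : Monotone fun r => k ≤ (univ.image fun j : Fin r => ω j).card :=
    fun r s hrs h => h.trans <| card_le_card fun x hx => by
      obtain ⟨j, -, rfl⟩ := mem_image.1 hx
      exact mem_image.2 ⟨Fin.castLE hrs j, mem_univ _, rfl⟩
  have hmeas (m : ℕ) :
      MeasurableSet {ω : ℕ → α | k ≤ (univ.image fun j : Fin m => ω j).card} :=
    (measurable_pi_lambda (fun (ω : ℕ → α) (i : Fin m) => ω i) fun i => measurable_pi_apply _)
      (Set.toFinite {a : Fin m → α | k ≤ (univ.image a).card}).measurableSet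
  have h0 (ω : ℕ → α) : ¬ k ≤ (univ.image fun j : Fin 0 => ω j).card := by
    simp [Nat.one_le_iff_ne_zero.1 hk]
  rw [lintegral_firstTime μ hmono h0 hmeas, tsum_congr (measure_card_image_lt hμ k),
    Summable.tsum_finsetSum fun _ _ => ENNReal.summable]
  rfl

end Measure

theorem natCast_div_natCast_sub_eq_ofReal {n i : ℕ} (hi : i < n) :
    (n : ℝ≥0∞) / ((n : ℝ≥0∞) - (i : ℝ≥0∞)) = ENNReal.ofReal (n / (n - i)) := by
  have hpos : (0 : ℝ) < (n - i : ℕ) := by exact_mod_cast Nat.sub_pos_of_lt hi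
  rw [← ENNReal.natCast_sub, ← Nat.cast_sub hi.le, ENNReal.ofReal_div_of_pos hpos,
    ENNReal.ofReal_natCast, ENNReal.ofReal_natCast]

theorem sum_inv_natCast_sub_eq {n k : ℕ} (hk : k ≤ n) :
    ∑ i ∈ range k, 1 / ((n : ℝ) - i) = harmonicNumber n - harmonicNumber (n - k) := by
  induction k with
  | zero => simp
  | succ k ih =>
    have hsucc : n - k = n - (k + 1) + 1 := by omega
    rw [sum_range_succ, ih (by omega), hsucc]
    simp only [harmonicNumber, sum_range_succ]
    push_cast [Nat.cast_sub hk]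
    ring

theorem sum_natCast_div_eq_ofReal_harmonicNumber {n k : ℕ} (hk : k ≤ n) :
    ∑ i ∈ range k, (n : ℝ≥0∞) / ((n : ℝ≥0∞) - (i : ℝ≥0∞)) =
      ENNReal.ofReal (n * (harmonicNumber n - harmonicNumber (n - k))) := by
  have hlt (i : ℕ) (hi : i ∈ range k) : i < n := (mem_range.1 hi).trans_le hk
  rw [sum_congr rfl fun i hi => natCast_div_natCast_sub_eq_ofReal (hlt i hi),
    ← ENNReal.ofReal_sum_of_nonneg fun i hi => div_nonneg (Nat.cast_nonneg n)
      (sub_nonneg.2 (by exact_mod_cast (hlt i hi).le)),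
    ← sum_inv_natCast_sub_eq hk, mul_sum]
  simp only [mul_one_div]

section Bounds

variable (p : α → ℝ≥0∞) {k : ℕ}

theorem isBalanced_toReal_sojourn (hp : ∑ x, p x = 1)
    (hfin : ∀ S : Finset α, #S < k → sojourn p S ≠ ⊤) :
    IsBalanced (fun x => (p x).toReal) k fun S => (sojourn p S).toReal := by
  intro S hS
  have hp_ne_top (x : α) : p x ≠ ⊤ :=
    ENNReal.sum_ne_top.1 (hp ▸ ENNReal.one_ne_top) x (mem_univ x)
  have herase (x : α) (hx : x ∈ S) : sojourn p (S.erase x) ≠ ⊤ :=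
    hfin _ ((card_erase_lt_of_mem hx).trans hS)
  have h := congrArg ENNReal.toReal (sojourn_mul_complMass p hp (hfin S hS))
  rw [ENNReal.toReal_mul, ENNReal.toReal_add (by split_ifs <;> simp)
    (ENNReal.sum_ne_top.2 fun x hx => ENNReal.mul_ne_top (hp_ne_top x) (herase x hx)),
    ENNReal.toReal_sum fun x hx => ENNReal.mul_ne_top (hp_ne_top x) (herase x hx),
    complMass, ENNReal.toReal_sum fun x _ => hp_ne_top x] at h
  simpa [apply_ite ENNReal.toReal, complMass] using h

theorem sum_powersetCard_sojourn_eq_ofReal (hfin : ∀ S : Finset α, #S < k → sojourn p S ≠ ⊤)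
    {j : ℕ} (hj : j < k) :
    ∑ S ∈ powersetCard j univ, sojourn p S =
      ENNReal.ofReal (∑ S ∈ powersetCard j univ, (sojourn p S).toReal) := by
  have hlevel : ∀ S ∈ powersetCard j univ, sojourn p S ≠ ⊤ := fun S hS =>
    hfin S ((mem_powersetCard.1 hS).2 ▸ hj)
  rw [← ENNReal.toReal_sum hlevel, ENNReal.ofReal_toReal (ENNReal.sum_ne_top.2 hlevel)]

theorem sum_natCast_div_le_sum_sojourn (hp : ∑ x, p x = 1) (hk : k ≤ Fintype.card α) :
    ∑ j ∈ range k, (Fintype.card α : ℝ≥0∞) / ((Fintype.card α : ℝ≥0∞) - (j : ℝ≥0∞)) ≤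
      ∑ S with #S < k, sojourn p S := by
  by_cases hfin : ∀ S : Finset α, #S < k → sojourn p S ≠ ⊤
  swap
  · push Not at hfin
    obtain ⟨S, hS, htop⟩ := hfin
    rw [ENNReal.sum_eq_top.2 ⟨S, mem_filter.2 ⟨mem_univ S, hS⟩, htop⟩]
    exact le_top
  have hP : ∑ x, (p x).toReal = 1 := by
    rw [← ENNReal.toReal_sum fun x _ => ENNReal.sum_ne_top.1 (hp ▸ ENNReal.one_ne_top) x
      (mem_univ x), hp, ENNReal.toReal_one]
  rw [sum_card_lt_eq_sum_range_sum_powersetCard]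
  refine sum_le_sum fun j hj => ?_
  have hj := mem_range.1 hj
  have hM := (isBalanced_toReal_sojourn p hp hfin).card_le_sum_powersetCard_mul hP
    (fun S => ENNReal.toReal_nonneg) hk hj
  have hpos : (0 : ℝ) < Fintype.card α - j := sub_pos.2 (by exact_mod_cast hj.trans_le hk)
  rw [natCast_div_natCast_sub_eq_ofReal (hj.trans_le hk),
    sum_powersetCard_sojourn_eq_ofReal p hfin hj]
  exact ENNReal.ofReal_le_ofReal ((div_le_iff₀ hpos).2 hM)

theorem sojourn_uniform_ne_top {S : Finset α} (hS : #S < Fintype.card α) :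
    sojourn (fun _ => (Fintype.card α : ℝ≥0∞)⁻¹) S ≠ ⊤ := by
  refine sojourn_ne_top _ ?_
  rw [sum_const, nsmul_eq_mul, ← div_eq_mul_inv, ENNReal.div_lt_iff
    (.inl (Nat.cast_ne_zero.2 (by omega))) (.inl (ENNReal.natCast_ne_top _)), one_mul]
  exact_mod_cast hS

theorem sum_powersetCard_sojourn_uniform {j : ℕ} (hj : j < Fintype.card α) :
    ∑ S ∈ powersetCard j (univ : Finset α), sojourn (fun _ => (Fintype.card α : ℝ≥0∞)⁻¹) S =
      (Fintype.card α : ℝ≥0∞) / ((Fintype.card α : ℝ≥0∞) - (j : ℝ≥0∞)) := by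
  set n := Fintype.card α
  set u : α → ℝ≥0∞ := fun _ => (n : ℝ≥0∞)⁻¹
  have hu : ∑ x, u x = 1 := by
    simp only [u, sum_const, card_univ, nsmul_eq_mul]
    exact ENNReal.mul_inv_cancel (Nat.cast_ne_zero.2 (by omega)) (ENNReal.natCast_ne_top n)
  have hfin (S : Finset α) (hS : #S < j + 1) : sojourn u S ≠ ⊤ :=
    sojourn_uniform_ne_top (by omega)
  have hq : ∀ S ∈ powersetCard j univ,
      complMass (fun x => (u x).toReal) S = ((n : ℝ) - j) / n := by
    intro S hS
    have hcard : (#Sᶜ : ℝ) = n - j := by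
      rw [card_compl, (mem_powersetCard.1 hS).2, Nat.cast_sub hj.le]
    simp only [u, complMass, ENNReal.toReal_inv, ENNReal.toReal_natCast, sum_const, nsmul_eq_mul,
      hcard, div_eq_mul_inv]
  have hflux :=
    (isBalanced_toReal_sojourn u hu hfin).sum_powersetCard_mul_complMass j j.lt_succ_self
  rw [sum_congr rfl fun S hS => by rw [hq S hS], ← sum_mul, mul_div,
    div_eq_one_iff_eq (Nat.cast_ne_zero.2 (by omega))] at hflux
  rw [sum_powersetCard_sojourn_eq_ofReal u hfin j.lt_succ_self,
    natCast_div_natCast_sub_eq_ofReal hj,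
    (eq_div_iff (sub_pos.2 (by exact_mod_cast hj)).ne').2 hflux]

theorem sum_sojourn_uniform (hk : k ≤ Fintype.card α) :
    ∑ S : Finset α with #S < k, sojourn (fun _ => (Fintype.card α : ℝ≥0∞)⁻¹) S =
      ∑ j ∈ range k, (Fintype.card α : ℝ≥0∞) / ((Fintype.card α : ℝ≥0∞) - (j : ℝ≥0∞)) := by
  rw [sum_card_lt_eq_sum_range_sum_powersetCard]
  exact sum_congr rfl fun j hj => sum_powersetCard_sojourn_uniform ((mem_range.1 hj).trans_le hk)

end Bounds

end CouponCollector

/-- Let `n ≥ k ≥ 1`, and for a probability mass function `p` on `[n]` let `T_k^p` be the least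
`r ≥ 1` such that at least `k` distinct values appear among the first `r` coordinates of the
coordinate process on `[n]^ℕ` under the infinite product measure `μp` of `p` (characterized by
its values on cylinder sets).  Then `E[T_k^p] ≥ Σ_{i=0}^{k-1} n/(n−i)`, with equality for the
uniform distribution `u` (product measure `μu`): `E[T_k^u] = Σ_{i=0}^{k-1} n/(n−i)
= n(H_n − H_{n−k})`. -/
theorem expected_coverage_depth_lower_bound (n k : ℕ) (hk : 1 ≤ k) (hkn : k ≤ n)
    (p : Fin n → ℝ≥0∞) (hp : ∑ i, p i = 1) (μp μu : Measure (ℕ → Fin n))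
    (hμp : ∀ (m : ℕ) (a : Fin m → Fin n),
      μp {ω : ℕ → Fin n | ∀ i : Fin m, ω (i : ℕ) = a i} = ∏ i : Fin m, p (a i))
    (hμu : ∀ (m : ℕ) (a : Fin m → Fin n),
      μu {ω : ℕ → Fin n | ∀ i : Fin m, ω (i : ℕ) = a i} = ∏ _i : Fin m, ((n : ℝ≥0∞))⁻¹) :
    (∑ i ∈ Finset.range k, (n : ℝ≥0∞) / ((n : ℝ≥0∞) - (i : ℝ≥0∞)) ≤
      ∫⁻ ω, firstTime
        (fun r ω => k ≤ ((Finset.univ : Finset (Fin r)).image (fun j => ω (j : ℕ))).card) ω ∂μp) ∧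
    (∫⁻ ω, firstTime
        (fun r ω => k ≤ ((Finset.univ : Finset (Fin r)).image (fun j => ω (j : ℕ))).card) ω ∂μu =
      ∑ i ∈ Finset.range k, (n : ℝ≥0∞) / ((n : ℝ≥0∞) - (i : ℝ≥0∞))) ∧
    (∑ i ∈ Finset.range k, (n : ℝ≥0∞) / ((n : ℝ≥0∞) - (i : ℝ≥0∞)) =
      ENNReal.ofReal ((n : ℝ) * (harmonicNumber n - harmonicNumber (n - k)))) := by
  have hkn' : k ≤ Fintype.card (Fin n) := by rwa [Fintype.card_fin]
  refine ⟨?_, ?_, CouponCollector.sum_natCast_div_eq_ofReal_harmonicNumber hkn⟩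
  · rw [CouponCollector.lintegral_firstTime_card_image hμp hk]
    simpa using CouponCollector.sum_natCast_div_le_sum_sojourn p hp hkn'
  · rw [CouponCollector.lintegral_firstTime_card_image (p := fun _ => (n : ℝ≥0∞)⁻¹) hμu hk]
    simpa using CouponCollector.sum_sojourn_uniform hkn'
end

section
/- Let (Ω, P) be a probability space and let τ₁, …, τ_k : Ω → ℕ be random variables such that τ_i(ω) ≥ 1 for all i and ω, and for every ω the values τ₁(ω), …, τ_k(ω) are pairwise distinct. Then Σ_{i=1}^{k} E[τ_i] ≥ k(k+1)/2, and consequently max_{1≤i≤k} E[τ_i] ≥ (k+1)/2. -/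
open MeasureTheory Finset
open scoped ENNReal

lemma strictMono_succ_le {k : ℕ} (e : Fin k → ℕ) (he : StrictMono e)
    (h1 : ∀ i, 1 ≤ e i) : ∀ i : Fin k, (i : ℕ) + 1 ≤ e i := by
  have H : ∀ n, ∀ i : Fin k, (i : ℕ) = n → n + 1 ≤ e i := by
    intro n
    induction n with
    | zero => intro i hi; exact h1 i
    | succ n ih =>
      intro i hi
      have hik := i.isLt
      have hnk : n < k := by omega
      have hlt : (⟨n, hnk⟩ : Fin k) < i := by
        rw [Fin.lt_def]; simp; omega
      have h2 := he hlt
      have h3 := ih ⟨n, hnk⟩ rfl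
      omega
  exact fun i => H (i : ℕ) i rfl

lemma sum_inj_ge {k : ℕ} (f : Fin k → ℕ) (hinj : Function.Injective f)
    (hpos : ∀ i, 1 ≤ f i) : k * (k + 1) ≤ 2 * ∑ i, f i := by
  classical
  set t : Finset ℕ := Finset.univ.image f with ht
  have hcard : t.card = k := by
    rw [ht, Finset.card_image_of_injective _ hinj, Finset.card_univ, Fintype.card_fin]
  have hmem : ∀ i, 1 ≤ t.orderEmbOfFin hcard i := by
    intro i
    have h := t.orderEmbOfFin_mem hcard i
    obtain ⟨j, _, hj⟩ := Finset.mem_image.1 h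
    exact le_of_le_of_eq (hpos j) hj
  have hle : ∀ i : Fin k, (i : ℕ) + 1 ≤ t.orderEmbOfFin hcard i :=
    strictMono_succ_le _ (t.orderEmbOfFin hcard).strictMono hmem
  have hsum : ∑ i : Fin k, t.orderEmbOfFin hcard i ≤ ∑ i, f i := by
    have h1 : ∑ i : Fin k, t.orderEmbOfFin hcard i = ∑ x ∈ t, x := by
      apply Finset.sum_bij (fun i _ => t.orderEmbOfFin hcard i)
      · intro i _; exact t.orderEmbOfFin_mem hcard i
      · intro a _ b _ hab; exact (t.orderEmbOfFin hcard).injective hab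
      · intro b hb
        have : b ∈ Set.range (t.orderEmbOfFin hcard) := by
          rw [Finset.range_orderEmbOfFin]; exact hb
        obtain ⟨i, hi⟩ := this
        exact ⟨i, Finset.mem_univ i, hi⟩
      · intro i _; rfl
    rw [h1, ht, Finset.sum_image (fun a _ b _ h => hinj h)]
  have h2 : ∑ i : Fin k, ((i : ℕ) + 1) ≤ ∑ i : Fin k, t.orderEmbOfFin hcard i :=
    Finset.sum_le_sum fun i _ => hle i
  have hgauss : 2 * ∑ i : Fin k, ((i : ℕ) + 1) = k * (k + 1) := by
    rw [Finset.sum_add_distrib]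
    rw [show ∑ i : Fin k, (i : ℕ) = ∑ i ∈ Finset.range k, i from Fin.sum_univ_eq_sum_range (fun i => i) k]
    simp only [Finset.sum_const, Finset.card_univ, Fintype.card_fin, smul_eq_mul, mul_one]
    have hg := Finset.sum_range_id_mul_two k
    cases k with
    | zero => simp
    | succ m =>
      simp only [Nat.add_sub_cancel] at hg
      have hx : (m + 1) * (m + 1 + 1) = (m + 1) * m + 2 * (m + 1) := by ring
      rw [hx, ← hg]
      ring
  omega

/-- Let `(Ω, P)` be a probability space and `τ₁, …, τ_k : Ω → ℕ` random variables with
`τ_i(ω) ≥ 1` for all `i, ω` and `τ₁(ω), …, τ_k(ω)` pairwise distinct for every `ω`.  Then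
`Σ_{i=1}^{k} E[τ_i] ≥ k(k+1)/2`, and consequently `max_i E[τ_i] ≥ (k+1)/2` (expectations taken
in `[0,∞]`). -/
theorem random_access_lower_bound {Ω : Type*} [MeasurableSpace Ω] (P : Measure Ω)
    [IsProbabilityMeasure P] (k : ℕ) (hk : 1 ≤ k) (τ : Fin k → Ω → ℕ)
    (hmeas : ∀ i, Measurable (τ i)) (hpos : ∀ i ω, 1 ≤ τ i ω)
    (hdist : ∀ ω : Ω, Function.Injective fun i => τ i ω) :
    ((k : ℝ≥0∞) * ((k : ℝ≥0∞) + 1)) / 2 ≤ ∑ i : Fin k, ∫⁻ ω, (τ i ω : ℝ≥0∞) ∂P ∧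
      ∃ i : Fin k, ((k : ℝ≥0∞) + 1) / 2 ≤ ∫⁻ ω, (τ i ω : ℝ≥0∞) ∂P := by
  have hmeas' : ∀ i : Fin k, Measurable fun ω => (τ i ω : ℝ≥0∞) :=
    fun i => measurable_from_top.comp (hmeas i)
  have hmain : ((k : ℝ≥0∞) * ((k : ℝ≥0∞) + 1)) / 2 ≤ ∑ i : Fin k, ∫⁻ ω, (τ i ω : ℝ≥0∞) ∂P := by
    rw [← lintegral_finset_sum _ (fun i _ => hmeas' i)]
    have hpt : ∀ ω, ((k : ℝ≥0∞) * ((k : ℝ≥0∞) + 1)) / 2 ≤ ∑ i : Fin k, (τ i ω : ℝ≥0∞) := by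
      intro ω
      have hnat := sum_inj_ge (fun i => τ i ω) (hdist ω) (fun i => hpos i ω)
      rw [ENNReal.div_le_iff (by norm_num) (by norm_num)]
      calc (k : ℝ≥0∞) * ((k : ℝ≥0∞) + 1) = ((k * (k + 1) : ℕ) : ℝ≥0∞) := by push_cast; ring
        _ ≤ ((2 * ∑ i, τ i ω : ℕ) : ℝ≥0∞) := by exact_mod_cast Nat.cast_le.2 hnat
        _ = (∑ i : Fin k, (τ i ω : ℝ≥0∞)) * 2 := by push_cast; ring
    calc ((k : ℝ≥0∞) * ((k : ℝ≥0∞) + 1)) / 2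
        = ∫⁻ _, ((k : ℝ≥0∞) * ((k : ℝ≥0∞) + 1)) / 2 ∂P := by
          rw [lintegral_const, measure_univ, mul_one]
      _ ≤ ∫⁻ ω, ∑ i : Fin k, (τ i ω : ℝ≥0∞) ∂P := lintegral_mono fun ω => hpt ω
  refine ⟨hmain, ?_⟩
  by_contra hcon
  push_neg at hcon
  set c : ℝ≥0∞ := ((k : ℝ≥0∞) + 1) / 2 with hc
  have hcfin : c ≠ ∞ := by
    rw [hc]
    exact (ENNReal.div_lt_top (by simp) (by norm_num)).ne
  obtain ⟨i₀, _⟩ : ∃ i : Fin k, True := ⟨⟨0, hk⟩, trivial⟩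
  have hsplit : ∑ i : Fin k, ∫⁻ ω, (τ i ω : ℝ≥0∞) ∂P
      = ∫⁻ ω, (τ i₀ ω : ℝ≥0∞) ∂P + ∑ i ∈ Finset.univ.erase i₀, ∫⁻ ω, (τ i ω : ℝ≥0∞) ∂P :=
    (Finset.add_sum_erase _ _ (Finset.mem_univ i₀)).symm
  have hrest : ∑ i ∈ Finset.univ.erase i₀, ∫⁻ ω, (τ i ω : ℝ≥0∞) ∂P ≤ (k - 1 : ℕ) * c := by
    calc ∑ i ∈ Finset.univ.erase i₀, ∫⁻ ω, (τ i ω : ℝ≥0∞) ∂P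
        ≤ ∑ _i ∈ Finset.univ.erase i₀, c := Finset.sum_le_sum fun i _ => (hcon i).le
      _ = ((Finset.univ.erase i₀).card : ℝ≥0∞) * c := by rw [Finset.sum_const, nsmul_eq_mul]
      _ = (k - 1 : ℕ) * c := by
          rw [Finset.card_erase_of_mem (Finset.mem_univ i₀), Finset.card_univ, Fintype.card_fin]
  have hrestfin : ((k - 1 : ℕ) : ℝ≥0∞) * c ≠ ∞ := ENNReal.mul_ne_top (by simp) hcfin
  have hlt : ∑ i : Fin k, ∫⁻ ω, (τ i ω : ℝ≥0∞) ∂P < c + (k - 1 : ℕ) * c := by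
    rw [hsplit]
    have hfin2 : ∑ i ∈ Finset.univ.erase i₀, ∫⁻ ω, (τ i ω : ℝ≥0∞) ∂P ≠ ⊤ :=
      (lt_of_le_of_lt hrest hrestfin.lt_top).ne
    exact ENNReal.add_lt_add_of_lt_of_le hfin2 (hcon i₀) hrest
  have heq : c + ((k - 1 : ℕ) : ℝ≥0∞) * c = ((k : ℝ≥0∞) * ((k : ℝ≥0∞) + 1)) / 2 := by
    have : c + ((k - 1 : ℕ) : ℝ≥0∞) * c = (1 + ((k - 1 : ℕ) : ℝ≥0∞)) * c := by ring
    have hcast : (1 : ℝ≥0∞) + ((k - 1 : ℕ) : ℝ≥0∞) = (k : ℝ≥0∞) := by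
      rw [← Nat.cast_one, ← Nat.cast_add]
      congr 1
      omega
    rw [this, hc, hcast, div_eq_mul_inv, div_eq_mul_inv, mul_assoc]
  rw [heq] at hlt
  exact absurd hmain (not_le.2 hlt)
end
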